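/- Let Z ~ LCFUSN_{n,m}(μ, Σ, Δ) and Y ~ LSN_n(μ, Σ, α). The Kullback–Leibler divergence satisfies D(f_Z ‖ f_Y) = E[ln( 2^{m−1} Φ_m(Δ'X₀ | I_m − Δ'Δ) / Φ(α'ω^{−1}Σ^{1/2}X₀) )], where X₀ ~ CFUSN_{n,m}(0, I_n, Δ) and ω = diag(Σ)^{1/2}. -/

import Mathlib

open MeasureTheory Real Matrix

/-- Density of `N_k(0, V)` (for `V = 1` this is the standard `k`-variate normal density). -/
noncomputable def mvphi (k : ℕ) (V : Matrix (Fin k) (Fin k) ℝ) (z : Fin k → ℝ) : ℝ :=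
  (2 * Real.pi) ^ (-(k : ℝ) / 2) * (Real.sqrt V.det)⁻¹ * Real.exp (-(z ⬝ᵥ (V⁻¹ *ᵥ z)) / 2)

/-- CDF `Φ_k(x | V)` of `N_k(0, V)`. -/
noncomputable def mvPhi (k : ℕ) (V : Matrix (Fin k) (Fin k) ℝ) (x : Fin k → ℝ) : ℝ :=
  ∫ t in Set.Iic x, mvphi k V t

/-- Univariate standard normal density. -/
noncomputable def stdphi (x : ℝ) : ℝ := (Real.sqrt (2 * Real.pi))⁻¹ * Real.exp (-(x ^ 2) / 2)

/-- Univariate standard normal CDF `Φ`. -/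
noncomputable def stdPhi (x : ℝ) : ℝ := ∫ t in Set.Iic x, stdphi t

/-- For `Z ~ LCFUSN_{n,m}(μ, Σ, Δ)` and `Y ~ LSN_n(μ, Σ, α)`, the Kullback–Leibler divergence is
`D(f_Z‖f_Y) = E[ln(2^{m−1} Φ_m(Δ'X₀ | I_m − Δ'Δ) / Φ(α'ω⁻¹Σ^{1/2}X₀))]`,
where `X₀ ~ CFUSN_{n,m}(0, I_n, Δ)` and `ω = diag(Σ)^{1/2}`. -/
theorem KL_LCFUSN_LSN (n m : ℕ) (hm : 1 ≤ m) (μ : Fin n → ℝ)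
    (Sig S : Matrix (Fin n) (Fin n) ℝ) (hS : S.PosDef) (hSS : S * S = Sig)
    (Δ : Matrix (Fin n) (Fin m) ℝ)
    (hΔ : ∀ a : Fin m → ℝ, a ⬝ᵥ a = 1 → (Δ *ᵥ a) ⬝ᵥ (Δ *ᵥ a) < 1)
    (α : Fin n → ℝ) (f₀ fZ fY : (Fin n → ℝ) → ℝ)
    (hf₀ : ∀ z, f₀ z = 2 ^ m * mvphi n 1 z * mvPhi m (1 - Δᵀ * Δ) (Δᵀ *ᵥ z))
    (hfZ : ∀ u : Fin n → ℝ, (∀ i, 0 < u i) →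
      fZ u = 2 ^ m * (Real.sqrt Sig.det)⁻¹ * (∏ i, u i)⁻¹ *
        mvphi n 1 (S⁻¹ *ᵥ ((fun i => Real.log (u i)) - μ)) *
        mvPhi m (1 - Δᵀ * Δ) (Δᵀ *ᵥ (S⁻¹ *ᵥ ((fun i => Real.log (u i)) - μ))))
    (hfZ0 : ∀ u : Fin n → ℝ, ¬ (∀ i, 0 < u i) → fZ u = 0)
    (hfY : ∀ u : Fin n → ℝ, (∀ i, 0 < u i) →
      fY u = 2 * (Real.sqrt Sig.det)⁻¹ * (∏ i, u i)⁻¹ *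
        mvphi n 1 (S⁻¹ *ᵥ ((fun i => Real.log (u i)) - μ)) *
        stdPhi (∑ i, α i * (Real.sqrt (Sig i i))⁻¹ * (Real.log (u i) - μ i)))
    (hfY0 : ∀ u : Fin n → ℝ, ¬ (∀ i, 0 < u i) → fY u = 0) :
    ∫ u, fZ u * Real.log (fZ u / fY u) =
      ∫ z, f₀ z * Real.log (2 ^ (m - 1) * mvPhi m (1 - Δᵀ * Δ) (Δᵀ *ᵥ z) /
        stdPhi (∑ i, α i * (Real.sqrt (Sig i i))⁻¹ * (S *ᵥ z) i)) := by
  classical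
  have hSdet : 0 < S.det := hS.det_pos
  have hSunit : IsUnit S.det := isUnit_iff_ne_zero.mpr hSdet.ne'
  have hsqrt : Real.sqrt Sig.det = S.det := by
    rw [← hSS, Matrix.det_mul, ← sq, Real.sqrt_sq hSdet.le]
  -- the diffeomorphism
  set g : (Fin n → ℝ) → (Fin n → ℝ) := fun z i => Real.exp (μ i + (S *ᵥ z) i) with hg
  set f' : (Fin n → ℝ) → (Fin n → ℝ) →L[ℝ] (Fin n → ℝ) := fun z =>
    ((Matrix.diagonal (fun i => Real.exp (μ i + (S *ᵥ z) i)) * S).mulVecLin).toContinuousLinearMap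
    with hf'def
  have hSinv : ∀ w : Fin n → ℝ, S⁻¹ *ᵥ (S *ᵥ w) = w := by
    intro w
    rw [Matrix.mulVec_mulVec, Matrix.nonsing_inv_mul S hSunit, Matrix.one_mulVec]
  have hSinv' : ∀ w : Fin n → ℝ, S *ᵥ (S⁻¹ *ᵥ w) = w := by
    intro w
    rw [Matrix.mulVec_mulVec, Matrix.mul_nonsing_inv S hSunit, Matrix.one_mulVec]
  -- derivative
  have hderiv : ∀ z, HasFDerivAt g (f' z) z := by
    intro z
    have hA : HasFDerivAt (fun z : Fin n → ℝ => μ + S *ᵥ z)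
        (S.mulVecLin.toContinuousLinearMap) z :=
      (S.mulVecLin.toContinuousLinearMap.hasFDerivAt).const_add μ
    have hE : ∀ v : Fin n → ℝ, HasFDerivAt (fun v : Fin n → ℝ => fun i => Real.exp (v i))
        (((Matrix.diagonal (fun i => Real.exp (v i))).mulVecLin).toContinuousLinearMap) v := by
      intro v
      apply hasFDerivAt_pi''
      intro i
      have h1 := (Real.hasDerivAt_exp (v i)).comp_hasFDerivAt v (hasFDerivAt_apply (𝕜 := ℝ) i v)
      convert h1 using 1
      ext w
      simp [Matrix.mulVec_diagonal, Function.comp]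
      · rfl
      · ext w
        simp [Matrix.mulVec_diagonal, Function.comp]
    have h2 : HasFDerivAt g
        ((((Matrix.diagonal (fun i => Real.exp ((μ + S *ᵥ z) i))).mulVecLin).toContinuousLinearMap).comp
          (S.mulVecLin.toContinuousLinearMap)) z := (hE (μ + S *ᵥ z)).comp (g := fun v : Fin n → ℝ => fun i => Real.exp (v i)) z hA
    have heq : f' z =
        (((Matrix.diagonal (fun i => Real.exp ((μ + S *ᵥ z) i))).mulVecLin).toContinuousLinearMap).comp
          (S.mulVecLin.toContinuousLinearMap) := by
      ext w
      simp [hf'def, ← Matrix.mulVec_mulVec]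
    rw [heq]
    exact h2
  have hdet : ∀ z, (f' z).det = (∏ i, Real.exp (μ i + (S *ᵥ z) i)) * S.det := by
    intro z
    have h0 : ((f' z : ((Fin n → ℝ) →ₗ[ℝ] (Fin n → ℝ))))
        = (Matrix.diagonal (fun i => Real.exp (μ i + (S *ᵥ z) i)) * S).mulVecLin :=
      LinearMap.coe_toContinuousLinearMap _
    have : (f' z).det =
        LinearMap.det ((Matrix.diagonal (fun i => Real.exp (μ i + (S *ᵥ z) i)) * S).mulVecLin) := by
      unfold ContinuousLinearMap.det
      rw [h0]
    rw [this, ← Matrix.toLin'_apply', LinearMap.det_toLin', Matrix.det_mul,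
      Matrix.det_diagonal]
  have hdet_pos : ∀ z, 0 < (f' z).det := by
    intro z
    rw [hdet]
    exact mul_pos (Finset.prod_pos fun i _ => Real.exp_pos _) hSdet
  -- injectivity
  have hinj : Set.InjOn g Set.univ := by
    intro z _ z' _ h
    have h2 : S *ᵥ z = S *ᵥ z' := by
      funext i
      have := congrFun h i
      have := Real.exp_injective this
      linarith
    have := congrArg (fun w => S⁻¹ *ᵥ w) h2
    simpa [hSinv] using this
  -- image
  have horth : MeasurableSet {u : Fin n → ℝ | ∀ i, 0 < u i} := by
    have : {u : Fin n → ℝ | ∀ i, 0 < u i} = Set.univ.pi fun _ => Set.Ioi 0 := by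
      ext u; simp [Set.mem_pi]
    rw [this]
    exact MeasurableSet.univ_pi fun i => measurableSet_Ioi
  have himg : g '' Set.univ = {u : Fin n → ℝ | ∀ i, 0 < u i} := by
    ext u
    constructor
    · rintro ⟨z, -, rfl⟩ i
      exact Real.exp_pos _
    · intro hu
      refine ⟨S⁻¹ *ᵥ ((fun i => Real.log (u i)) - μ), Set.mem_univ _, ?_⟩
      funext i
      simp only [hg, hSinv']
      rw [Pi.sub_apply]
      rw [show μ i + (Real.log (u i) - μ i) = Real.log (u i) by ring, Real.exp_log (hu i)]
  -- key change of variables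
  have key := integral_image_eq_integral_abs_det_fderiv_smul (volume : Measure (Fin n → ℝ))
    MeasurableSet.univ (fun x _ => (hderiv x).hasFDerivWithinAt)
    hinj (fun u => fZ u * Real.log (fZ u / fY u))
  rw [himg] at key
  -- LHS reduces to the orthant
  have hLHS : ∫ u, fZ u * Real.log (fZ u / fY u) =
      ∫ u in {u : Fin n → ℝ | ∀ i, 0 < u i}, fZ u * Real.log (fZ u / fY u) := by
    rw [← integral_indicator horth]
    congr 1
    funext u
    rw [Set.indicator_apply]
    split_ifs with h
    · rfl
    · rw [hfZ0 u h, zero_mul]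
  rw [hLHS, key, setIntegral_univ]
  congr 1
  funext z
  -- pointwise identity
  have hpos : ∀ i, 0 < g z i := fun i => Real.exp_pos _
  have hlog : (fun i => Real.log (g z i)) - μ = S *ᵥ z := by
    funext i
    simp [hg, Real.log_exp]
  have hlogi : ∀ i, Real.log (g z i) - μ i = (S *ᵥ z) i := fun i => congrFun hlog i
  have hz : S⁻¹ *ᵥ ((fun i => Real.log (g z i)) - μ) = z := by rw [hlog, hSinv]
  have hprod : ∏ i, g z i = ∏ i, Real.exp (μ i + (S *ᵥ z) i) := rfl
  have hprod_pos : 0 < ∏ i, Real.exp (μ i + (S *ᵥ z) i) :=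
    Finset.prod_pos fun i _ => Real.exp_pos _
  have hphi_pos : 0 < mvphi n 1 z := by
    rw [mvphi]
    have : ((1 : Matrix (Fin n) (Fin n) ℝ)).det = 1 := Matrix.det_one
    rw [this]
    positivity
  set P := ∏ i, Real.exp (μ i + (S *ᵥ z) i) with hP
  set φv := mvphi n 1 z with hφv
  set Φm := mvPhi m (1 - Δᵀ * Δ) (Δᵀ *ᵥ z) with hΦm
  set Φ1 := stdPhi (∑ i, α i * (Real.sqrt (Sig i i))⁻¹ * (S *ᵥ z) i) with hΦ1
  have hfZg : fZ (g z) = 2 ^ m * (S.det)⁻¹ * P⁻¹ * φv * Φm := by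
    rw [hfZ (g z) hpos, hz, hsqrt, hprod]
  have hfYg : fY (g z) = 2 * (S.det)⁻¹ * P⁻¹ * φv * Φ1 := by
    rw [hfY (g z) hpos, hz, hsqrt, hprod]
    congr 2
    exact Finset.sum_congr rfl fun i _ => by rw [hlogi i]
  have hc_ne : (S.det)⁻¹ * P⁻¹ * φv ≠ 0 := by positivity
  have hratio : fZ (g z) / fY (g z) = 2 ^ (m - 1) * Φm / Φ1 := by
    rw [hfZg, hfYg]
    have h2m : (2 : ℝ) ^ m = 2 * 2 ^ (m - 1) := by
      rw [← pow_succ']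
      congr 1
      omega
    rw [h2m]
    rw [show 2 * 2 ^ (m - 1) * (S.det)⁻¹ * P⁻¹ * φv * Φm
        = (2 * (2 ^ (m - 1) * Φm)) * ((S.det)⁻¹ * P⁻¹ * φv) by ring,
      show 2 * (S.det)⁻¹ * P⁻¹ * φv * Φ1 = (2 * Φ1) * ((S.det)⁻¹ * P⁻¹ * φv) by ring,
      mul_div_mul_right _ _ hc_ne, mul_div_mul_left _ _ (two_ne_zero), mul_div_assoc]
  have hmain : |(f' z).det| * fZ (g z) = f₀ z := by
    rw [abs_of_pos (hdet_pos z), hdet, hfZg, hf₀]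
    field_simp
    ring
  rw [smul_eq_mul, ← mul_assoc, show |(f' z).det| * fZ (g z) * Real.log (fZ (g z) / fY (g z))
      = (|(f' z).det| * fZ (g z)) * Real.log (fZ (g z) / fY (g z)) by ring, hmain, hratio,
    mul_div_assoc]
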